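/- For the Robbins–Monro algorithm under (HL) and (HUA), the functions f_i^γ(θ,y) := v_i(θ − γ_i H(θ,y)), with v_i(θ) := E[|θ_n − θ*| | θ_i = θ], satisfy the Lipschitz bound in y uniformly in θ: [f_i^γ]₁ ≤ (Π_n Π_i^{−1})^{1/2} γ_i [H]₁, where Π_n = ∏_{k=0}^{n−1}(1 − 2λ̲γ_{k+1} + [H]₁²γ_{k+1}²). -/

import Mathlib

open MeasureTheory Real ProbabilityTheory
open scoped RealInnerProductSpace

/-!
Run the algorithm from `z = θ - γ_i H(θ,y)` and `z' = θ - γ_i H(θ,y')` with the same noise. One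
step sends `Δ = A - B` to `Δ - γ (H(A,Y) - H(B,Y))`; expanding the square and averaging over the
innovation `Y`, which is independent of `(A, B)`, replaces `H` by the mean field `h`, whose strong
monotonicity (integrate `⟪Dh ξ, ξ⟫ ≥ λ‖ξ‖²` along segments) gives
`E‖Δ_{j+1}‖² ≤ (1 - 2λγ + [H]²γ²) E‖Δ_j‖²`. Iterating from `i` to `n` and using
`|E‖A - θ*‖ - E‖B - θ*‖| ≤ E‖A - B‖ ≤ (E‖A - B‖²)^{1/2}` together with
`‖z - z'‖ ≤ γ_i [H] ‖y - y'‖` gives the bound.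

When `Π_i = 0` the right-hand side is `0` (division by zero). A factor can only vanish if
`λ = [H]`, and then `H(θ, ·)` is constant, so the left-hand side vanishes too.
-/

lemma LipschitzWith.curry_left {α β γ : Type*} [PseudoEMetricSpace α] [PseudoEMetricSpace β]
    [PseudoEMetricSpace γ] {f : α → β → γ} {K : NNReal}
    (hf : LipschitzWith K fun p : α × β => f p.1 p.2) (y : β) : LipschitzWith K (f · y) := by
  simpa [Function.comp_def] using hf.comp (LipschitzWith.prodMk_right y)

lemma LipschitzWith.curry_right {α β γ : Type*} [PseudoEMetricSpace α] [PseudoEMetricSpace β]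
    [PseudoEMetricSpace γ] {f : α → β → γ} {K : NNReal}
    (hf : LipschitzWith K fun p : α × β => f p.1 p.2) (a : α) : LipschitzWith K (f a) := by
  simpa [Function.comp_def] using hf.comp (LipschitzWith.prodMk_left a)

lemma one_sub_two_mul_mul_add_sq_mul_sq_nonneg {lam K g : ℝ} (hlamK : lam ≤ K) (hg : 0 ≤ g) :
    0 ≤ 1 - 2 * lam * g + K ^ 2 * g ^ 2 := by
  nlinarith [sq_nonneg (1 - K * g), mul_nonneg (sub_nonneg.mpr hlamK) hg]

lemma eq_of_one_sub_two_mul_mul_add_sq_mul_sq_eq_zero {lam K g : ℝ} (hlamK : lam ≤ K)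
    (hg : 0 < g) (h0 : 1 - 2 * lam * g + K ^ 2 * g ^ 2 = 0) : lam = K := by
  nlinarith [sq_nonneg (1 - K * g), mul_nonneg (sub_nonneg.mpr hlamK) hg.le]

section InnerProductSpace

variable {E : Type*} [NormedAddCommGroup E] [InnerProductSpace ℝ E]

lemma mul_norm_sub_sq_le_inner_of_fderiv {h : E → E} (hd : Differentiable ℝ h) {lam : ℝ}
    (hcoer : ∀ x ξ, lam * ‖ξ‖ ^ 2 ≤ ⟪fderiv ℝ h x ξ, ξ⟫) (a b : E) :
    lam * ‖a - b‖ ^ 2 ≤ ⟪h a - h b, a - b⟫ := by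
  set v := a - b
  set φ : ℝ → ℝ := fun t => ⟪h (b + t • v), v⟫ - t * (lam * ‖v‖ ^ 2)
  have hφ : ∀ t, HasDerivAt φ (⟪fderiv ℝ h (b + t • v) v, v⟫ - lam * ‖v‖ ^ 2) t := by
    intro t
    have hline : HasDerivAt (fun t : ℝ => b + t • v) v t := by
      simpa using ((hasDerivAt_id t).smul_const v).const_add b
    have hcomp := (hd (b + t • v)).hasFDerivAt.comp_hasDerivAt t hline
    have hinner : HasDerivAt (fun t => ⟪h (b + t • v), v⟫) ⟪fderiv ℝ h (b + t • v) v, v⟫ t := by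
      simpa using hcomp.inner ℝ (hasDerivAt_const t v)
    exact hinner.sub (hasDerivAt_mul_const _)
  have hmono : Monotone φ := monotone_of_deriv_nonneg (fun t => (hφ t).differentiableAt)
    fun t => by rw [(hφ t).deriv]; linarith [hcoer (b + t • v) v]
  have h01 := hmono zero_le_one
  simp only [φ, zero_smul, add_zero, zero_mul, sub_zero, one_smul, one_mul] at h01
  rw [show b + v = a from add_sub_cancel b a] at h01
  rw [inner_sub_left]
  linarith

lemma le_of_mul_norm_sub_sq_le_inner [Nontrivial E] {h : E → E} {lam K : ℝ}
    (hmono : ∀ a b, lam * ‖a - b‖ ^ 2 ≤ ⟪h a - h b, a - b⟫)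
    (hlip : ∀ a b, ‖h a - h b‖ ≤ K * ‖a - b‖) : lam ≤ K := by
  obtain ⟨a, b, hab⟩ := exists_pair_ne E
  have hpos : 0 < ‖a - b‖ := norm_pos_iff.mpr (sub_ne_zero.mpr hab)
  have hle : lam * ‖a - b‖ ^ 2 ≤ K * ‖a - b‖ ^ 2 :=
    calc lam * ‖a - b‖ ^ 2 ≤ ⟪h a - h b, a - b⟫ := hmono a b
      _ ≤ ‖h a - h b‖ * ‖a - b‖ := real_inner_le_norm _ _
      _ ≤ K * ‖a - b‖ * ‖a - b‖ := by gcongr; exact hlip a b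
      _ = K * ‖a - b‖ ^ 2 := by ring
  exact le_of_mul_le_mul_right hle (by positivity)

lemma eq_of_norm_le_of_norm_sq_le_inner {u w : E} (hn : ‖u‖ ≤ ‖w‖) (hi : ‖w‖ ^ 2 ≤ ⟪u, w⟫) :
    u = w := by
  have hsq : ‖u - w‖ ^ 2 ≤ 0 := by
    rw [norm_sub_sq_real]
    nlinarith [norm_nonneg u]
  exact sub_eq_zero.mp (norm_eq_zero.mp (by nlinarith [norm_nonneg (u - w)]))

lemma sub_eq_smul_sub_of_mul_norm_sub_sq_le_inner {h : E → E} {K : ℝ} (hK : 0 ≤ K)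
    (hmono : ∀ a b, K * ‖a - b‖ ^ 2 ≤ ⟪h a - h b, a - b⟫)
    (hlip : ∀ a b, ‖h a - h b‖ ≤ K * ‖a - b‖) (a b : E) :
    h a - h b = K • (a - b) := by
  have hnorm : ‖K • (a - b)‖ = K * ‖a - b‖ := by rw [norm_smul, norm_of_nonneg hK]
  apply eq_of_norm_le_of_norm_sq_le_inner (hnorm ▸ hlip a b)
  rw [hnorm, real_inner_smul_right]
  nlinarith [hmono a b]

lemma abs_inner_le_mul_norm_sq {u v : E} {K : ℝ} (hu : ‖u‖ ≤ K * ‖v‖) :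
    |⟪u, v⟫| ≤ K * ‖v‖ ^ 2 :=
  calc |⟪u, v⟫| ≤ ‖u‖ * ‖v‖ := abs_real_inner_le_norm _ _
    _ ≤ K * ‖v‖ * ‖v‖ := by gcongr
    _ = K * ‖v‖ ^ 2 := by ring

lemma norm_sub_smul_sub_le {a b u v : E} {g K : ℝ} (hg : 0 ≤ g)
    (huv : ‖u - v‖ ≤ K * ‖a - b‖) :
    ‖(a - g • u) - (b - g • v)‖ ≤ (1 + g * K) * ‖a - b‖ :=
  calc ‖(a - g • u) - (b - g • v)‖ = ‖(a - b) - g • (u - v)‖ := by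
        rw [smul_sub]; congr 1; abel
    _ ≤ ‖a - b‖ + g * ‖u - v‖ := by
        grw [norm_sub_le, norm_smul, norm_of_nonneg hg]
    _ ≤ (1 + g * K) * ‖a - b‖ := by nlinarith

lemma norm_sub_smul_sub_sq_le {a b u v : E} {g K : ℝ} (huv : ‖u - v‖ ≤ K * ‖a - b‖) :
    ‖(a - g • u) - (b - g • v)‖ ^ 2 ≤
      (1 + K ^ 2 * g ^ 2) * ‖a - b‖ ^ 2 - 2 * g * ⟪u - v, a - b⟫ := by
  have hexp : ‖(a - g • u) - (b - g • v)‖ ^ 2 =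
      ‖a - b‖ ^ 2 - 2 * g * ⟪u - v, a - b⟫ + g ^ 2 * ‖u - v‖ ^ 2 := by
    rw [show (a - g • u) - (b - g • v) = (a - b) - g • (u - v) by rw [smul_sub]; abel,
      norm_sub_sq_real, real_inner_smul_right, norm_smul, mul_pow, norm_eq_abs, sq_abs,
      real_inner_comm]
    ring
  have hsq : ‖u - v‖ ^ 2 ≤ K ^ 2 * ‖a - b‖ ^ 2 := by
    rw [← mul_pow]; exact pow_le_pow_left₀ (norm_nonneg _) huv 2
  rw [hexp]
  nlinarith [sq_nonneg g]

lemma eq_of_lipschitzWith_of_eq_smul_add {T : Type*} [PseudoMetricSpace T] {H : E → T → E}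
    {K : NNReal} (hH : LipschitzWith K fun p : E × T => H p.1 p.2) {y₀ : T} {c : E}
    (h₀ : ∀ a, H a y₀ = (K : ℝ) • a + c) (a : E) (y : T) : H a y = H a y₀ := by
  by_contra hne
  set v := H a y - H a y₀
  have hv : 0 < ‖v‖ := norm_pos_iff.mpr (sub_ne_zero.mpr hne)
  -- compare `(a, y)` with a point `(a - s v, y₀)` far out along `v`, where `H · y₀` has slope `K`
  set s := dist y y₀ / ‖v‖ + 1
  have hs : 0 < s := by positivity
  have hsv : s * ‖v‖ = dist y y₀ + ‖v‖ := by
    simp only [s, add_mul, div_mul_cancel₀ _ hv.ne', one_mul]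
  have hdiff : H a y - H (a - s • v) y₀ = (1 + K * s) • v := by
    simp only [h₀, v, smul_sub, smul_smul, add_smul, one_smul]; abel
  have hdist : dist (a, y) (a - s • v, y₀) = s * ‖v‖ := by
    rw [Prod.dist_eq, dist_eq_norm, sub_sub_cancel, norm_smul, norm_of_nonneg hs.le,
      max_eq_left (by linarith [dist_nonneg (x := y) (y := y₀)])]
  have hlip := hH.dist_le_mul (a, y) (a - s • v, y₀)
  rw [hdist, dist_eq_norm, hdiff, norm_smul, norm_of_nonneg (by positivity)] at hlip
  nlinarith

end InnerProductSpace

section Probability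

variable {Ω : Type*} [MeasurableSpace Ω] {μ : Measure Ω}

lemma abs_integral_sub_integral_le {f g k : Ω → ℝ} (hf : AEStronglyMeasurable f μ)
    (hg : AEStronglyMeasurable g μ) (hk : Integrable k μ) (hfgk : ∀ ω, |f ω - g ω| ≤ k ω) :
    |∫ ω, f ω ∂μ - ∫ ω, g ω ∂μ| ≤ ∫ ω, k ω ∂μ := by
  have hfg : Integrable (fun ω => f ω - g ω) μ := hk.mono' (hf.sub hg) (ae_of_all _ hfgk)
  by_cases hfi : Integrable f μ
  · have hgi : Integrable g μ := (hfi.sub hfg).congr (ae_of_all _ fun ω => sub_sub_cancel _ _)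
    rw [← integral_sub hfi hgi]
    exact (abs_integral_le_integral_abs).trans (integral_mono hfg.abs hk hfgk)
  · have hgi : ¬ Integrable g μ := fun hgi =>
      hfi ((hgi.add hfg).congr (ae_of_all _ fun ω => add_sub_cancel _ _))
    rw [integral_undef hfi, integral_undef hgi, sub_zero, abs_zero]
    exact integral_nonneg fun ω => (abs_nonneg _).trans (hfgk ω)

lemma sq_integral_le_integral_sq [IsProbabilityMeasure μ] {f : Ω → ℝ} (hf : MemLp f 2 μ) :
    (∫ ω, f ω ∂μ) ^ 2 ≤ ∫ ω, f ω ^ 2 ∂μ := by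
  have := variance_eq_sub hf ▸ variance_nonneg f μ
  simp only [Pi.pow_apply] at this
  linarith

lemma abs_integral_norm_sub_sub_le_sqrt [IsProbabilityMeasure μ] {E : Type*}
    [NormedAddCommGroup E] {A B : Ω → E} (hA : AEStronglyMeasurable A μ)
    (hB : AEStronglyMeasurable B μ) (hAB : MemLp (fun ω => A ω - B ω) 2 μ) (c : E) :
    |∫ ω, ‖A ω - c‖ ∂μ - ∫ ω, ‖B ω - c‖ ∂μ| ≤ √(∫ ω, ‖A ω - B ω‖ ^ 2 ∂μ) := by
  have hnorm : MemLp (fun ω => ‖A ω - B ω‖) 2 μ := hAB.norm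
  calc |∫ ω, ‖A ω - c‖ ∂μ - ∫ ω, ‖B ω - c‖ ∂μ| ≤ ∫ ω, ‖A ω - B ω‖ ∂μ :=
        abs_integral_sub_integral_le (hA.sub aestronglyMeasurable_const).norm
          (hB.sub aestronglyMeasurable_const).norm
          (hnorm.integrable one_le_two) fun ω => by
            simpa using abs_norm_sub_norm_le (A ω - c) (B ω - c)
    _ ≤ √(∫ ω, ‖A ω - B ω‖ ^ 2 ∂μ) :=
        (le_abs_self _).trans (Real.abs_le_sqrt (sq_integral_le_integral_sq hnorm))

lemma ae_forall_eq_of_continuous {X : Type*} [TopologicalSpace X]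
    [TopologicalSpace.SeparableSpace X] {Z : Type*} [TopologicalSpace Z] [T2Space Z]
    {F : X → Ω → Z} {f : X → Z}
    (hF : ∀ ω, Continuous (F · ω)) (hf : Continuous f) (hae : ∀ x, ∀ᵐ ω ∂μ, F x ω = f x) :
    ∀ᵐ ω ∂μ, ∀ x, F x ω = f x := by
  obtain ⟨D, hDc, hDd⟩ := TopologicalSpace.exists_countable_dense X
  filter_upwards [(ae_ball_iff hDc).mpr fun x _ => hae x] with ω hω
  exact congrFun (Continuous.ext_on hDd (hF ω) hf hω)

variable {E : Type*} [NormedAddCommGroup E] [InnerProductSpace ℝ E]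

lemma ae_eq_of_integral_eq_of_norm_le [CompleteSpace E] [IsProbabilityMeasure μ] {X : Ω → E}
    (hX : Integrable X μ) {w : E} (hmean : ∫ ω, X ω ∂μ = w) (hle : ∀ ω, ‖X ω‖ ≤ ‖w‖) :
    ∀ᵐ ω ∂μ, X ω = w := by
  have hdefect : ∀ ω, 0 ≤ ‖w‖ ^ 2 - ⟪X ω, w⟫ := fun ω => by
    nlinarith [real_inner_le_norm (X ω) w, hle ω, norm_nonneg w]
  have hint : Integrable (fun ω => ‖w‖ ^ 2 - ⟪X ω, w⟫) μ :=
    (integrable_const _).sub (hX.inner_const w)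
  have hzero : ∫ ω, (‖w‖ ^ 2 - ⟪X ω, w⟫) ∂μ = 0 := by
    simp_rw [real_inner_comm w]
    rw [integral_sub (integrable_const _) (hX.const_inner w), integral_inner hX, hmean,
      real_inner_self_eq_norm_sq]
    simp
  filter_upwards [(integral_eq_zero_iff_of_nonneg hdefect hint).mp hzero] with ω hω
  exact eq_of_norm_le_of_norm_sq_le_inner (hle ω) (by rw [Pi.zero_apply] at hω; linarith)

lemma ProbabilityTheory.IndepFun.integral_comp_eq_integral_integral [IsFiniteMeasure μ]
    {S T F : Type*} [MeasurableSpace S] [MeasurableSpace T] [NormedAddCommGroup F]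
    [NormedSpace ℝ F] {X : Ω → S} {Y : Ω → T} (hXY : IndepFun X Y μ) (hX : Measurable X)
    (hY : Measurable Y) {G : S → T → F} (hG : StronglyMeasurable (Function.uncurry G))
    (hint : Integrable (fun ω => G (X ω) (Y ω)) μ) :
    ∫ ω, G (X ω) (Y ω) ∂μ = ∫ ω, ∫ ω', G (X ω) (Y ω') ∂μ ∂μ := by
  have hlaw := (indepFun_iff_map_prod_eq_prod_map_map hX.aemeasurable hY.aemeasurable).mp hXY
  have hint' : Integrable (Function.uncurry G) ((μ.map X).prod (μ.map Y)) := by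
    rw [← hlaw]
    exact (integrable_map_measure hG.aestronglyMeasurable (hX.prodMk hY).aemeasurable).mpr hint
  calc ∫ ω, G (X ω) (Y ω) ∂μ = ∫ p, Function.uncurry G p ∂(μ.map fun ω => (X ω, Y ω)) :=
        (integral_map (hX.prodMk hY).aemeasurable hG.aestronglyMeasurable).symm
    _ = ∫ x, ∫ y, G x y ∂(μ.map Y) ∂(μ.map X) := by rw [hlaw, integral_prod _ hint']; rfl
    _ = ∫ ω, ∫ ω', G (X ω) (Y ω') ∂μ ∂μ := by
        refine (integral_map hX.aemeasurable (f := fun x => ∫ y, G x y ∂(μ.map Y))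
          hG.integral_prod_right'.aestronglyMeasurable).trans ?_
        congr 1 with ω
        exact integral_map hY.aemeasurable
          (hG.comp_measurable measurable_prodMk_left).aestronglyMeasurable

lemma ProbabilityTheory.iIndepFun.indepFun_of_measurable_iSup {ι S T : Type*}
    [MeasurableSpace S] [mT : MeasurableSpace T] {Y : ι → Ω → T} (hiid : iIndepFun Y μ)
    (hY : ∀ k, Measurable (Y k)) {I : Set ι} {k : ι} (hk : k ∉ I) {X : Ω → S}
    (hX : Measurable[⨆ j ∈ I, mT.comap (Y j)] X) : IndepFun X (Y k) μ := by
  have hind := indep_iSup_of_disjoint (fun j => (hY j).comap_le) hiid.iIndep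
    (Set.disjoint_singleton_right.mpr hk)
  rw [iSup_singleton] at hind
  exact (IndepFun_iff_Indep _ _ _).mpr (indep_of_indep_of_le_left hind hX.comap_le)

end Probability

section MeanField

variable {Ω : Type*} [MeasurableSpace Ω] {μ : Measure Ω}
  {E : Type*} [NormedAddCommGroup E] [InnerProductSpace ℝ E]
  {T : Type*} {H : E → T → E} {Y : Ω → T}

-- Without integrability the Bochner integral is `0` everywhere, which coercivity excludes.
lemma integrable_comp_of_fderiv_integral_coercive [IsFiniteMeasure μ]
    (hHY : ∀ a, AEStronglyMeasurable (fun ω => H a (Y ω)) μ) {K : ℝ}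
    (hHlip : ∀ a b y, ‖H a y - H b y‖ ≤ K * ‖a - b‖) {lam : ℝ} (hlam : 0 < lam)
    (hcoer : ∀ θ ξ, lam * ‖ξ‖ ^ 2 ≤ ⟪fderiv ℝ (fun θ => ∫ ω, H θ (Y ω) ∂μ) θ ξ, ξ⟫) (a : E) :
    Integrable (fun ω => H a (Y ω)) μ := by
  by_contra ha
  have hnot : ∀ b, ¬ Integrable (fun ω => H b (Y ω)) μ := fun b hb => ha <|
    ((Integrable.of_bound ((hHY a).sub (hHY b)) _ (ae_of_all _ fun ω => hHlip a b (Y ω))).add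
      hb).congr (ae_of_all _ fun ω => sub_add_cancel _ _)
  have hzero : (fun θ => ∫ ω, H θ (Y ω) ∂μ) = 0 := funext fun θ => integral_undef (hnot θ)
  have htriv : ∀ ξ : E, ξ = 0 := fun ξ => by
    have hle : lam * ‖ξ‖ ^ 2 ≤ 0 := by simpa [hzero] using hcoer 0 ξ
    have hsq : ‖ξ‖ ^ 2 ≤ 0 := by nlinarith [sq_nonneg ‖ξ‖]
    simpa using hsq
  exact ha ((integrable_zero Ω E μ).congr (ae_of_all _ fun ω => (htriv _).symm))

lemma norm_integral_sub_integral_le [IsProbabilityMeasure μ]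
    (hint : ∀ a, Integrable (fun ω => H a (Y ω)) μ) {K : ℝ}
    (hHlip : ∀ a b y, ‖H a y - H b y‖ ≤ K * ‖a - b‖) (a b : E) :
    ‖∫ ω, H a (Y ω) ∂μ - ∫ ω, H b (Y ω) ∂μ‖ ≤ K * ‖a - b‖ := by
  rw [← integral_sub (hint a) (hint b)]
  simpa using norm_integral_le_of_norm_le_const (ae_of_all μ fun ω => hHlip a b (Y ω))

variable [CompleteSpace E]

lemma apply_eq_of_lipschitzWith_of_mean_strongly_monotone [IsProbabilityMeasure μ]
    [TopologicalSpace.SeparableSpace E] [PseudoMetricSpace T] {h : E → E} {K : NNReal}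
    (hH : LipschitzWith K fun p : E × T => H p.1 p.2)
    (hint : ∀ a, Integrable (fun ω => H a (Y ω)) μ) (hmean : ∀ a, ∫ ω, H a (Y ω) ∂μ = h a)
    (hmono : ∀ a b, K * ‖a - b‖ ^ 2 ≤ ⟪h a - h b, a - b⟫) (a : E) (y y' : T) :
    H a y = H a y' := by
  have hHlip : ∀ y, LipschitzWith K (H · y) := hH.curry_left
  have hhlip : ∀ a b, ‖h a - h b‖ ≤ K * ‖a - b‖ := fun a b => by
    rw [← hmean, ← hmean]
    exact norm_integral_sub_integral_le hint (fun a b y => (hHlip y).norm_sub_le a b) a b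
  have hlin : ∀ b, h b - h 0 = (K : ℝ) • b := fun b => by
    simpa using sub_eq_smul_sub_of_mul_norm_sub_sq_le_inner K.2 hmono hhlip b 0
  have hae : ∀ b, ∀ᵐ ω ∂μ, H b (Y ω) - H 0 (Y ω) = (K : ℝ) • b := fun b =>
    ae_eq_of_integral_eq_of_norm_le (X := fun ω => H b (Y ω) - H 0 (Y ω))
      ((hint b).sub (hint 0))
      (by rw [integral_sub (hint b) (hint 0), hmean, hmean, hlin])
      (fun ω => by simpa [norm_smul] using (hHlip (Y ω)).norm_sub_le b 0)
  obtain ⟨ω₀, hω₀⟩ := (ae_forall_eq_of_continuous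
    (fun ω => (hHlip (Y ω)).continuous.sub continuous_const) (continuous_const_smul _) hae).exists
  have h₀ : ∀ b, H b (Y ω₀) = (K : ℝ) • b + H 0 (Y ω₀) := fun b => sub_eq_iff_eq_add.mp (hω₀ b)
  rw [eq_of_lipschitzWith_of_eq_smul_add hH h₀ a y, eq_of_lipschitzWith_of_eq_smul_add hH h₀ a y']

lemma one_sub_two_mul_mul_add_sq_mul_sq_ne_zero_of_apply_ne [IsProbabilityMeasure μ]
    [TopologicalSpace.SeparableSpace E] [PseudoMetricSpace T] {h : E → E} {K : NNReal}
    {lam g : ℝ} (hH : LipschitzWith K fun p : E × T => H p.1 p.2)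
    (hint : ∀ a, Integrable (fun ω => H a (Y ω)) μ) (hmean : ∀ a, ∫ ω, H a (Y ω) ∂μ = h a)
    (hmono : ∀ a b, lam * ‖a - b‖ ^ 2 ≤ ⟪h a - h b, a - b⟫) (hlamK : lam ≤ K) (hg : 0 < g)
    {a : E} {y y' : T} (hne : H a y ≠ H a y') :
    1 - 2 * lam * g + (K : ℝ) ^ 2 * g ^ 2 ≠ 0 := fun h0 => by
  obtain rfl := eq_of_one_sub_two_mul_mul_add_sq_mul_sq_eq_zero hlamK hg h0
  exact hne (apply_eq_of_lipschitzWith_of_mean_strongly_monotone hH hint hmean hmono a y y')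

variable [MeasurableSpace E] [BorelSpace E] [SecondCountableTopology E] [MeasurableSpace T]

lemma mul_integral_norm_sub_sq_le_integral_inner [IsProbabilityMeasure μ] {h : E → E}
    {K lam : ℝ} (hHmeas : Measurable fun p : E × T => H p.1 p.2) (hY : Measurable Y)
    (hHlip : ∀ a b y, ‖H a y - H b y‖ ≤ K * ‖a - b‖)
    (hint : ∀ a, Integrable (fun ω => H a (Y ω)) μ) (hmean : ∀ a, ∫ ω, H a (Y ω) ∂μ = h a)
    (hmono : ∀ a b, lam * ‖a - b‖ ^ 2 ≤ ⟪h a - h b, a - b⟫)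
    {A B : Ω → E} (hA : Measurable A) (hB : Measurable B)
    (hind : IndepFun (fun ω => (A ω, B ω)) Y μ)
    (hAB : Integrable (fun ω => ‖A ω - B ω‖ ^ 2) μ) :
    lam * ∫ ω, ‖A ω - B ω‖ ^ 2 ∂μ ≤ ∫ ω, ⟪H (A ω) (Y ω) - H (B ω) (Y ω), A ω - B ω⟫ ∂μ := by
  set G : E × E → T → ℝ := fun p y => ⟪H p.1 y - H p.2 y, p.1 - p.2⟫
  have hGmeas : Measurable (Function.uncurry G) := by
    have h1 : Measurable fun q : (E × E) × T => H q.1.1 q.2 :=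
      hHmeas.comp (measurable_fst.fst.prodMk measurable_snd)
    have h2 : Measurable fun q : (E × E) × T => H q.1.2 q.2 :=
      hHmeas.comp (measurable_fst.snd.prodMk measurable_snd)
    exact (h1.sub h2).inner (measurable_fst.fst.sub measurable_fst.snd)
  have hGint : Integrable (fun ω => G (A ω, B ω) (Y ω)) μ :=
    (hAB.const_mul K).mono' (hGmeas.comp ((hA.prodMk hB).prodMk hY)).aestronglyMeasurable
      (ae_of_all _ fun ω => abs_inner_le_mul_norm_sq (hHlip _ _ _))
  -- freezing `(A, B)` and averaging over the independent `Y` turns `H` into `h`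
  have hfreeze : ∀ a b, ∫ ω', G (a, b) (Y ω') ∂μ = ⟪h a - h b, a - b⟫ := fun a b => by
    simp_rw [G, real_inner_comm (a - b)]
    rw [integral_inner (f := fun ω => H a (Y ω) - H b (Y ω)) ((hint a).sub (hint b)),
      integral_sub (hint a) (hint b), hmean, hmean]
  have hhlip : ∀ a b, ‖h a - h b‖ ≤ K * ‖a - b‖ := fun a b => by
    simpa only [hmean] using norm_integral_sub_integral_le hint hHlip a b
  have hhcont : Continuous h :=
    (LipschitzWith.of_dist_le_mul (K := K.toNNReal) fun a b => by
      simpa only [dist_eq_norm] using (hhlip a b).trans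
        (mul_le_mul_of_nonneg_right (Real.le_coe_toNNReal K) (norm_nonneg _))).continuous
  have hmean_int : Integrable (fun ω => ⟪h (A ω) - h (B ω), A ω - B ω⟫) μ :=
    (hAB.const_mul K).mono' (((hhcont.measurable.comp hA).sub (hhcont.measurable.comp hB)).inner
      (hA.sub hB)).aestronglyMeasurable (ae_of_all _ fun ω => abs_inner_le_mul_norm_sq (hhlip _ _))
  rw [hind.integral_comp_eq_integral_integral (hA.prodMk hB) hY hGmeas.stronglyMeasurable hGint,
    ← integral_const_mul]
  simp_rw [hfreeze]
  exact integral_mono (hAB.const_mul lam) hmean_int fun ω => hmono _ _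

lemma integral_norm_sub_smul_sub_sq_le [IsProbabilityMeasure μ] {h : E → E} {K lam g : ℝ}
    (hHmeas : Measurable fun p : E × T => H p.1 p.2) (hY : Measurable Y)
    (hHlip : ∀ a b y, ‖H a y - H b y‖ ≤ K * ‖a - b‖)
    (hint : ∀ a, Integrable (fun ω => H a (Y ω)) μ) (hmean : ∀ a, ∫ ω, H a (Y ω) ∂μ = h a)
    (hmono : ∀ a b, lam * ‖a - b‖ ^ 2 ≤ ⟪h a - h b, a - b⟫)
    {A B : Ω → E} (hA : Measurable A) (hB : Measurable B)
    (hind : IndepFun (fun ω => (A ω, B ω)) Y μ)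
    (hAB : Integrable (fun ω => ‖A ω - B ω‖ ^ 2) μ) (hg : 0 ≤ g) :
    ∫ ω, ‖(A ω - g • H (A ω) (Y ω)) - (B ω - g • H (B ω) (Y ω))‖ ^ 2 ∂μ ≤
      (1 - 2 * lam * g + K ^ 2 * g ^ 2) * ∫ ω, ‖A ω - B ω‖ ^ 2 ∂μ := by
  have hHA := hHmeas.comp (hA.prodMk hY)
  have hHB := hHmeas.comp (hB.prodMk hY)
  have hinner : Integrable (fun ω => ⟪H (A ω) (Y ω) - H (B ω) (Y ω), A ω - B ω⟫) μ :=
    (hAB.const_mul K).mono' ((hHA.sub hHB).inner (hA.sub hB)).aestronglyMeasurable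
      (ae_of_all _ fun ω => abs_inner_le_mul_norm_sq (hHlip _ _ _))
  have hnext : Integrable
      (fun ω => ‖(A ω - g • H (A ω) (Y ω)) - (B ω - g • H (B ω) (Y ω))‖ ^ 2) μ := by
    refine (hAB.const_mul ((1 + g * K) ^ 2)).mono' ?_ (ae_of_all _ fun ω => ?_)
    · exact (((hA.sub (hHA.const_smul g)).sub (hB.sub (hHB.const_smul g))).norm.pow_const
        2).aestronglyMeasurable
    · rw [norm_pow, norm_norm, ← mul_pow]
      exact pow_le_pow_left₀ (norm_nonneg _) (norm_sub_smul_sub_le hg (hHlip _ _ _)) 2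
  calc ∫ ω, ‖(A ω - g • H (A ω) (Y ω)) - (B ω - g • H (B ω) (Y ω))‖ ^ 2 ∂μ
      ≤ ∫ ω, ((1 + K ^ 2 * g ^ 2) * ‖A ω - B ω‖ ^ 2 -
          2 * g * ⟪H (A ω) (Y ω) - H (B ω) (Y ω), A ω - B ω⟫) ∂μ :=
        integral_mono hnext ((hAB.const_mul _).sub (hinner.const_mul _))
          fun ω => norm_sub_smul_sub_sq_le (hHlip _ _ _)
    _ = (1 + K ^ 2 * g ^ 2) * ∫ ω, ‖A ω - B ω‖ ^ 2 ∂μ -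
          2 * g * ∫ ω, ⟪H (A ω) (Y ω) - H (B ω) (Y ω), A ω - B ω⟫ ∂μ := by
        rw [integral_sub (hAB.const_mul _) (hinner.const_mul _), integral_const_mul,
          integral_const_mul]
    _ ≤ (1 - 2 * lam * g + K ^ 2 * g ^ 2) * ∫ ω, ‖A ω - B ω‖ ^ 2 ∂μ := by
        nlinarith [mul_le_mul_of_nonneg_left (mul_integral_norm_sub_sq_le_integral_inner hHmeas hY
          hHlip hint hmean hmono hA hB hind hAB) hg]

end MeanField

section RobbinsMonro

variable {Ω : Type*} {E : Type*} [NormedAddCommGroup E] [InnerProductSpace ℝ E] {T : Type*}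
  {Y : ℕ → Ω → T} {H : E → T → E} {γ : ℕ → ℝ} {i : ℕ} {Φ : E → ℕ → Ω → E}

lemma norm_sub_le_prod_of_recursion {K : ℝ} (hK : 0 ≤ K)
    (hHlip : ∀ a b y, ‖H a y - H b y‖ ≤ K * ‖a - b‖) (hγ : ∀ k, i < k → 0 ≤ γ k)
    (hinit : ∀ z ω, Φ z i ω = z)
    (hrec : ∀ z j ω, i ≤ j → Φ z (j + 1) ω = Φ z j ω - γ (j + 1) • H (Φ z j ω) (Y (j + 1) ω))
    (z z' : E) {j : ℕ} (hj : i ≤ j) (ω : Ω) :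
    ‖Φ z j ω - Φ z' j ω‖ ≤ (∏ k ∈ Finset.Ico i j, (1 + γ (k + 1) * K)) * ‖z - z'‖ := by
  induction j, hj using Nat.le_induction with
  | base => simp [hinit]
  | succ j hj ih =>
    have hγj := hγ (j + 1) (by omega)
    rw [hrec z j ω hj, hrec z' j ω hj, Finset.prod_Ico_succ_top hj]
    calc _ ≤ (1 + γ (j + 1) * K) * ‖Φ z j ω - Φ z' j ω‖ := norm_sub_smul_sub_le hγj (hHlip _ _ _)
      _ ≤ (1 + γ (j + 1) * K) * ((∏ k ∈ Finset.Ico i j, (1 + γ (k + 1) * K)) * ‖z - z'‖) := by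
          gcongr
      _ = _ := by ring

variable [mT : MeasurableSpace T]

lemma measurable_iSup_comap_of_recursion [MeasurableSpace E] [BorelSpace E]
    [SecondCountableTopology E] (hHmeas : Measurable fun p : E × T => H p.1 p.2)
    (hinit : ∀ z ω, Φ z i ω = z)
    (hrec : ∀ z j ω, i ≤ j → Φ z (j + 1) ω = Φ z j ω - γ (j + 1) • H (Φ z j ω) (Y (j + 1) ω))
    (z : E) {j : ℕ} (hj : i ≤ j) :
    Measurable[⨆ k ∈ Set.Iic j, mT.comap (Y k)] (Φ z j) := by
  induction j, hj using Nat.le_induction with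
  | base => rw [show Φ z i = fun _ => z from funext (hinit z)]; exact measurable_const
  | succ j hj ih =>
    have hΦ : Measurable[⨆ k ∈ Set.Iic (j + 1), mT.comap (Y k)] (Φ z j) :=
      ih.mono (biSup_mono fun k hk => Set.mem_Iic.mpr (Nat.le_succ_of_le hk)) le_rfl
    have hY : Measurable[⨆ k ∈ Set.Iic (j + 1), mT.comap (Y k)] (Y (j + 1)) :=
      Measurable.of_comap_le (le_biSup (fun k => mT.comap (Y k)) (Set.mem_Iic.mpr le_rfl))
    rw [show Φ z (j + 1) = _ from funext (hrec z j · hj)]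
    exact hΦ.sub ((hHmeas.comp (hΦ.prodMk hY)).const_smul _)

variable [MeasurableSpace Ω] [CompleteSpace E] [MeasurableSpace E] [BorelSpace E]
  [SecondCountableTopology E]
  {μ : Measure Ω} [IsProbabilityMeasure μ]

lemma integral_norm_sub_sq_le_prod_of_recursion {h : E → E} {K lam : ℝ} (hK : 0 ≤ K)
    (hlamK : lam ≤ K) (hYmeas : ∀ k, Measurable (Y k)) (hiid : iIndepFun Y μ)
    (hHmeas : Measurable fun p : E × T => H p.1 p.2)
    (hHlip : ∀ a b y, ‖H a y - H b y‖ ≤ K * ‖a - b‖)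
    (hint : ∀ k a, Integrable (fun ω => H a (Y k ω)) μ)
    (hmean : ∀ k a, ∫ ω, H a (Y k ω) ∂μ = h a)
    (hmono : ∀ a b, lam * ‖a - b‖ ^ 2 ≤ ⟪h a - h b, a - b⟫) (hγ : ∀ k, i < k → 0 ≤ γ k)
    (hinit : ∀ z ω, Φ z i ω = z)
    (hrec : ∀ z j ω, i ≤ j → Φ z (j + 1) ω = Φ z j ω - γ (j + 1) • H (Φ z j ω) (Y (j + 1) ω))
    (z z' : E) {j : ℕ} (hj : i ≤ j) :
    ∫ ω, ‖Φ z j ω - Φ z' j ω‖ ^ 2 ∂μ ≤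
      (∏ k ∈ Finset.Ico i j, (1 - 2 * lam * γ (k + 1) + K ^ 2 * γ (k + 1) ^ 2)) * ‖z - z'‖ ^ 2 := by
  induction j, hj using Nat.le_induction with
  | base => simp [hinit]
  | succ j hj ih =>
    have hγj := hγ (j + 1) (by omega)
    have hF := fun z => measurable_iSup_comap_of_recursion hHmeas hinit hrec z hj
    have hΦ := fun z => (hF z).mono (iSup₂_le fun k _ => (hYmeas k).comap_le) le_rfl
    have hind : IndepFun (fun ω => (Φ z j ω, Φ z' j ω)) (Y (j + 1)) μ :=
      hiid.indepFun_of_measurable_iSup hYmeas (by simp) ((hF z).prodMk (hF z'))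
    have hsq : Integrable (fun ω => ‖Φ z j ω - Φ z' j ω‖ ^ 2) μ :=
      Integrable.of_bound (((hΦ z).sub (hΦ z')).norm.pow_const 2).aestronglyMeasurable _
        (ae_of_all _ fun ω => by
          rw [norm_pow, norm_norm]
          exact pow_le_pow_left₀ (norm_nonneg _)
            (norm_sub_le_prod_of_recursion hK hHlip hγ hinit hrec z z' hj ω) 2)
    have hstep := integral_norm_sub_smul_sub_sq_le hHmeas (hYmeas (j + 1)) hHlip (hint (j + 1))
      (hmean (j + 1)) hmono (hΦ z) (hΦ z') hind hsq hγj
    simp_rw [← hrec _ j _ hj] at hstep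
    rw [Finset.prod_Ico_succ_top hj]
    calc _ ≤ _ := hstep
      _ ≤ (1 - 2 * lam * γ (j + 1) + K ^ 2 * γ (j + 1) ^ 2) *
            ((∏ k ∈ Finset.Ico i j, (1 - 2 * lam * γ (k + 1) + K ^ 2 * γ (k + 1) ^ 2)) *
              ‖z - z'‖ ^ 2) :=
          mul_le_mul_of_nonneg_left ih (one_sub_two_mul_mul_add_sq_mul_sq_nonneg hlamK hγj)
      _ = _ := by ring

lemma abs_integral_norm_sub_le_sqrt_prod_of_recursion {h : E → E} {K lam : ℝ} (hK : 0 ≤ K)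
    (hlamK : lam ≤ K) (hYmeas : ∀ k, Measurable (Y k)) (hiid : iIndepFun Y μ)
    (hHmeas : Measurable fun p : E × T => H p.1 p.2)
    (hHlip : ∀ a b y, ‖H a y - H b y‖ ≤ K * ‖a - b‖)
    (hint : ∀ k a, Integrable (fun ω => H a (Y k ω)) μ)
    (hmean : ∀ k a, ∫ ω, H a (Y k ω) ∂μ = h a)
    (hmono : ∀ a b, lam * ‖a - b‖ ^ 2 ≤ ⟪h a - h b, a - b⟫) (hγ : ∀ k, i < k → 0 ≤ γ k)
    (hinit : ∀ z ω, Φ z i ω = z)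
    (hrec : ∀ z j ω, i ≤ j → Φ z (j + 1) ω = Φ z j ω - γ (j + 1) • H (Φ z j ω) (Y (j + 1) ω))
    (c z z' : E) {n : ℕ} (hn : i ≤ n) :
    |∫ ω, ‖Φ z n ω - c‖ ∂μ - ∫ ω, ‖Φ z' n ω - c‖ ∂μ| ≤
      √(∏ k ∈ Finset.Ico i n, (1 - 2 * lam * γ (k + 1) + K ^ 2 * γ (k + 1) ^ 2)) * ‖z - z'‖ := by
  have hΦ := fun z => (measurable_iSup_comap_of_recursion hHmeas hinit hrec z hn).mono
    (iSup₂_le fun k _ => (hYmeas k).comap_le) le_rfl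
  have hL2 : MemLp (fun ω => Φ z n ω - Φ z' n ω) 2 μ :=
    MemLp.of_bound ((hΦ z).sub (hΦ z')).aestronglyMeasurable _
      (ae_of_all _ (norm_sub_le_prod_of_recursion hK hHlip hγ hinit hrec z z' hn))
  have hprod : 0 ≤ ∏ k ∈ Finset.Ico i n, (1 - 2 * lam * γ (k + 1) + K ^ 2 * γ (k + 1) ^ 2) :=
    Finset.prod_nonneg fun k hk =>
      one_sub_two_mul_mul_add_sq_mul_sq_nonneg hlamK (hγ _ (by simp at hk; omega))
  calc _ ≤ √(∫ ω, ‖Φ z n ω - Φ z' n ω‖ ^ 2 ∂μ) :=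
        abs_integral_norm_sub_sub_le_sqrt (hΦ z).aestronglyMeasurable
          (hΦ z').aestronglyMeasurable hL2 c
    _ ≤ √((∏ k ∈ Finset.Ico i n, (1 - 2 * lam * γ (k + 1) + K ^ 2 * γ (k + 1) ^ 2)) *
          ‖z - z'‖ ^ 2) :=
        Real.sqrt_le_sqrt (integral_norm_sub_sq_le_prod_of_recursion hK hlamK hYmeas hiid hHmeas
          hHlip hint hmean hmono hγ hinit hrec z z' hn)
    _ = _ := by rw [Real.sqrt_mul hprod, Real.sqrt_sq (norm_nonneg _)]

end RobbinsMonro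

theorem robbins_monro_fn_lipschitz_general
    {Ω : Type*} [m0 : MeasurableSpace Ω] (μ : Measure Ω) [IsProbabilityMeasure μ]
    {d q : ℕ}
    (Y : ℕ → Ω → EuclideanSpace ℝ (Fin q)) (hYmeas : ∀ i, Measurable (Y i))
    (hiid : iIndepFun Y μ)
    (hident : ∀ i, IdentDistrib (Y i) (Y 1) μ μ)
    (H : EuclideanSpace ℝ (Fin d) → EuclideanSpace ℝ (Fin q) → EuclideanSpace ℝ (Fin d))
    (KH : ℝ) (hKH : 0 < KH)
    -- (HL)
    (hHlip : LipschitzWith (Real.toNNReal KH)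
      (fun p : EuclideanSpace ℝ (Fin d) × EuclideanSpace ℝ (Fin q) => H p.1 p.2))
    (h : EuclideanSpace ℝ (Fin d) → EuclideanSpace ℝ (Fin d))
    (hdef : ∀ θ', h θ' = ∫ ω, H θ' (Y 1 ω) ∂μ)
    -- (HUA)
    (hC1 : ContDiff ℝ 1 h) (lam : ℝ) (hlam : 0 < lam)
    (hattract : ∀ θ' ξ, lam * ‖ξ‖ ^ 2 ≤ ⟪fderiv ℝ h θ' ξ, ξ⟫)
    (θstar : EuclideanSpace ℝ (Fin d))
    (γ : ℕ → ℝ) (hγpos : ∀ k, 1 ≤ k → 0 < γ k)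
    (i n : ℕ) (h1i : 1 ≤ i) (hin : i ≤ n)
    -- `Φ z` is the algorithm started from `z` at step `i`
    (Φ : EuclideanSpace ℝ (Fin d) → ℕ → Ω → EuclideanSpace ℝ (Fin d))
    (hinit : ∀ z ω, Φ z i ω = z)
    (hrec : ∀ z j ω, i ≤ j → Φ z (j + 1) ω = Φ z j ω - γ (j + 1) • H (Φ z j ω) (Y (j + 1) ω)) :
    ∀ (θ : EuclideanSpace ℝ (Fin d)) (y y' : EuclideanSpace ℝ (Fin q)),
      |(∫ ω, ‖Φ (θ - γ i • H θ y) n ω - θstar‖ ∂μ) -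
        ∫ ω, ‖Φ (θ - γ i • H θ y') n ω - θstar‖ ∂μ| ≤
      Real.sqrt
        ((∏ k ∈ Finset.range n, (1 - 2 * lam * γ (k + 1) + KH ^ 2 * γ (k + 1) ^ 2)) /
          ∏ k ∈ Finset.range i, (1 - 2 * lam * γ (k + 1) + KH ^ 2 * γ (k + 1) ^ 2)) *
        γ i * KH * ‖y - y'‖ := by
  intro θ y y'
  obtain rfl : h = fun θ' => ∫ ω, H θ' (Y 1 ω) ∂μ := funext hdef
  have hK : (KH.toNNReal : ℝ) = KH := Real.coe_toNNReal _ hKH.le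
  have hγi := hγpos i h1i
  have hHmeas := hHlip.continuous.measurable
  have hHθ : ∀ a b y, ‖H a y - H b y‖ ≤ KH * ‖a - b‖ := fun a b y =>
    hK ▸ (hHlip.curry_left y).norm_sub_le a b
  have hint1 := integrable_comp_of_fderiv_integral_coercive (H := H) (Y := Y 1)
    (fun a => (hHmeas.comp (measurable_const.prodMk (hYmeas 1))).aestronglyMeasurable) hHθ hlam
    hattract
  have hlaw : ∀ k a, IdentDistrib (fun ω => H a (Y k ω)) (fun ω => H a (Y 1 ω)) μ μ :=
    fun k a => (hident k).comp (hHmeas.comp measurable_prodMk_left)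
  have hmono := mul_norm_sub_sq_le_inner_of_fderiv (hC1.differentiable one_ne_zero) hattract
  by_cases hyy : H θ y = H θ y'
  · rw [hyy, sub_self, abs_zero]
    exact mul_nonneg (mul_nonneg (mul_nonneg (sqrt_nonneg _) hγi.le) hKH.le) (norm_nonneg _)
  have : Nontrivial (EuclideanSpace ℝ (Fin d)) := ⟨⟨_, _, hyy⟩⟩
  have hlamK := le_of_mul_norm_sub_sq_le_inner hmono (norm_integral_sub_integral_le hint1 hHθ)
  have hPi : ∏ k ∈ Finset.range i, (1 - 2 * lam * γ (k + 1) + KH ^ 2 * γ (k + 1) ^ 2) ≠ 0 :=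
    Finset.prod_ne_zero_iff.mpr fun k _ => hK ▸
      one_sub_two_mul_mul_add_sq_mul_sq_ne_zero_of_apply_ne hHlip hint1 (fun _ => rfl) hmono
        (hlamK.trans_eq hK.symm) (hγpos _ k.succ_pos) hyy
  have hz : ‖(θ - γ i • H θ y) - (θ - γ i • H θ y')‖ ≤ γ i * (KH * ‖y - y'‖) := by
    rw [sub_sub_sub_cancel_left, ← smul_sub, norm_smul, norm_of_nonneg hγi.le, norm_sub_rev y]
    exact mul_le_mul_of_nonneg_left (hK ▸ (hHlip.curry_right θ).norm_sub_le y' y) hγi.le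
  rw [← Finset.prod_range_mul_prod_Ico _ hin, mul_div_cancel_left₀ _ hPi]
  calc _ ≤ _ := abs_integral_norm_sub_le_sqrt_prod_of_recursion hKH.le hlamK hYmeas hiid hHmeas
        hHθ (fun k a => (hlaw k a).integrable_iff.mpr (hint1 a)) (fun k a => (hlaw k a).integral_eq)
        hmono (fun k hk => (hγpos k (by omega)).le) hinit hrec θstar _ _ hin
    _ ≤ _ := mul_le_mul_of_nonneg_left hz (sqrt_nonneg _)
    _ = _ := by ring

/-- Lipschitz control in `y`, uniformly in `θ`, of the functions
`f_i^γ(θ,y) = v_i(θ - γ_i H(θ,y))` where `v_i(θ) = E[|θ_n^{θ,i} - θ*|]`. -/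
theorem robbins_monro_fn_lipschitz
    {Ω : Type*} [m0 : MeasurableSpace Ω] (μ : Measure Ω) [IsProbabilityMeasure μ]
    {d q : ℕ}
    (Y : ℕ → Ω → EuclideanSpace ℝ (Fin q)) (hYmeas : ∀ i, Measurable (Y i))
    (hiid : iIndepFun Y μ)
    (hident : ∀ i, IdentDistrib (Y i) (Y 1) μ μ)
    (H : EuclideanSpace ℝ (Fin d) → EuclideanSpace ℝ (Fin q) → EuclideanSpace ℝ (Fin d))
    (KH : ℝ) (hKH : 0 < KH)
    -- (HL)
    (hHlip : LipschitzWith (Real.toNNReal KH)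
      (fun p : EuclideanSpace ℝ (Fin d) × EuclideanSpace ℝ (Fin q) => H p.1 p.2))
    (h : EuclideanSpace ℝ (Fin d) → EuclideanSpace ℝ (Fin d))
    (hdef : ∀ θ', h θ' = ∫ ω, H θ' (Y 1 ω) ∂μ)
    -- (HUA)
    (hC1 : ContDiff ℝ 1 h) (lam : ℝ) (hlam : 0 < lam)
    (hattract : ∀ θ' ξ, lam * ‖ξ‖ ^ 2 ≤ ⟪fderiv ℝ h θ' ξ, ξ⟫)
    (θstar : EuclideanSpace ℝ (Fin d)) (hroot : h θstar = 0)
    (γ : ℕ → ℝ) (hγpos : ∀ k, 1 ≤ k → 0 < γ k)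
    (i n : ℕ) (h1i : 1 ≤ i) (hin : i ≤ n)
    -- `Φ z` is the algorithm started from `z` at step `i`
    (Φ : EuclideanSpace ℝ (Fin d) → ℕ → Ω → EuclideanSpace ℝ (Fin d))
    (hinit : ∀ z ω, Φ z i ω = z)
    (hrec : ∀ z j ω, i ≤ j → Φ z (j + 1) ω = Φ z j ω - γ (j + 1) • H (Φ z j ω) (Y (j + 1) ω)) :
    ∀ (θ : EuclideanSpace ℝ (Fin d)) (y y' : EuclideanSpace ℝ (Fin q)),
      |(∫ ω, ‖Φ (θ - γ i • H θ y) n ω - θstar‖ ∂μ) -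
        ∫ ω, ‖Φ (θ - γ i • H θ y') n ω - θstar‖ ∂μ| ≤
      Real.sqrt
        ((∏ k ∈ Finset.range n, (1 - 2 * lam * γ (k + 1) + KH ^ 2 * γ (k + 1) ^ 2)) /
          ∏ k ∈ Finset.range i, (1 - 2 * lam * γ (k + 1) + KH ^ 2 * γ (k + 1) ^ 2)) *
        γ i * KH * ‖y - y'‖ :=
  robbins_monro_fn_lipschitz_general (m0 := m0) μ Y hYmeas hiid hident H KH hKH hHlip h hdef hC1 lam
    hlam hattract θstar γ hγpos i n h1i hin Φ hinit hrec
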